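/- arXiv:2004.10146 — 2 statements merged into one kernel-verified Lean document; each statement's English description precedes it below -/
import Mathlib

section
/- Let e ∈ {1,…,p−1} and let v ∈ ⟨e⟩_p. Then the zeroth p-adic digit of v equals e or p−e, i.e. a_0(v) ∈ {e, p−e}. -/
open scoped Classical

namespace SL2

/-- the `i`-th digit of `v` in base `p`. -/
def digit (p v i : ℕ) : ℕ := v / p ^ i % p

/-- position of the leading (highest nonzero) digit of `v ≥ 1`. -/
def lead (p v : ℕ) : ℕ := Nat.log p v

/-- a nonempty set of consecutive integers -/
def IsStretch (S : Finset ℕ) : Prop :=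
  S.Nonempty ∧ ∀ a ∈ S, ∀ b ∈ S, ∀ c, a ≤ c → c ≤ b → c ∈ S

/-- `S` is down-admissible for `v`. -/
def DownAdm (p v : ℕ) (S : Finset ℕ) : Prop :=
  (∀ s ∈ S, (s = 0 ∨ s - 1 ∉ S) → digit p v s ≠ 0) ∧
  (∀ s ∈ S, digit p v (s + 1) = 0 → s + 1 ∈ S)

/-- `S` is up-admissible for `v`. -/
def UpAdm (p v : ℕ) (S : Finset ℕ) : Prop :=
  (∀ s ∈ S, (s = 0 ∨ s - 1 ∉ S) → digit p v s ≠ 0) ∧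
  (∀ s ∈ S, digit p v (s + 1) = p - 1 → s + 1 ∈ S)

/-- the downward reflection `v[S]`. -/
def reflDown (p v : ℕ) (S : Finset ℕ) : ℕ :=
  (∑ i ∈ Finset.range (lead p v + 1),
    (if i ∈ S then -((digit p v i : ℤ) * p ^ i) else ((digit p v i : ℤ) * p ^ i))).toNat

/-- the upward reflection `v(S)`. -/
def reflUp (p v : ℕ) (S : Finset ℕ) : ℕ :=
  (∑ i ∈ Finset.range (lead p v + 2),
    (if i ∈ S then -((digit p v i : ℤ) * p ^ i)
     else if i - 1 ∈ S ∧ 1 ≤ i then ((digit p v i : ℤ) + 2) * p ^ i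
     else (digit p v i : ℤ) * p ^ i)).toNat

/-- `T` is the down-admissible hull of `S` for `v`. -/
def IsHull (p v : ℕ) (S T : Finset ℕ) : Prop :=
  DownAdm p v T ∧ S ⊆ T ∧ ∀ T', DownAdm p v T' → S ⊆ T' → T ⊆ T'

noncomputable def hull (p v : ℕ) (S : Finset ℕ) : Finset ℕ :=
  if h : ∃ T, IsHull p v S T then h.choose else ∅

/-- `v[⟨i⟩]`, the downward reflection of `v` along the down-admissible hull of `{i}`. -/
noncomputable def reflDownHull (p v i : ℕ) : ℕ := reflDown p v (hull p v {i})

/-- `D_v`, the set of positions of nonzero non-leading digits of `v`. -/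
def Dset (p v : ℕ) : Finset ℕ :=
  (Finset.range (lead p v)).filter (fun i => digit p v i ≠ 0)

/-- one step of the relation generating `∼_S`. -/
noncomputable def SimStep (p : ℕ) (S : Finset ℕ) (v w : ℕ) : Prop :=
  v ≠ w ∧ S ⊆ Dset p v ∧ S ⊆ Dset p w ∧
    ∃ k ∈ Dset p v, k ∉ S ∧ w = reflDownHull p v k

/-- the equivalence relation `∼_S`. -/
noncomputable def Sim (p : ℕ) (S : Finset ℕ) (v w : ℕ) : Prop :=
  Relation.EqvGen (SimStep p S) v w

/-- the set `C_v`. -/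
noncomputable def Cset (p v : ℕ) : Set ℕ := {w | 1 ≤ w ∧ Sim p (Dset p v) v w}

/-- minimal down-admissible stretch for `v`. -/
def MinDownStretch (p v : ℕ) (S : Finset ℕ) : Prop :=
  DownAdm p v S ∧ IsStretch S ∧
    ∀ T ⊆ S, DownAdm p v T → IsStretch T → T = S

/-- minimal up-admissible stretch for `v`. -/
def MinUpStretch (p v : ℕ) (S : Finset ℕ) : Prop :=
  UpAdm p v S ∧ IsStretch S ∧
    ∀ T ⊆ S, UpAdm p v T → IsStretch T → T = S

/-- adjacency in the graph underlying the quiver algebra. -/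
def BlockAdj (p : ℕ) (v w : ℕ) : Prop :=
  (1 ≤ v ∧ 1 ≤ w) ∧
    ((∃ S, MinDownStretch p v S ∧ w = reflDown p v S) ∨
     (∃ S, MinDownStretch p w S ∧ v = reflDown p w S))

/-- the block `⟨e⟩_p`: the connected component of `e`. -/
def block (p e : ℕ) : Set ℕ := {v | 1 ≤ v ∧ Relation.ReflTransGen (BlockAdj p) e v}

/-- `e` is an eve: exactly one nonzero `p`-adic digit. -/
def IsEve (p e : ℕ) : Prop := 1 ≤ e ∧ Dset p e = ∅

end SL2

theorem Int.sum_range_succ_modEq_apply_zero {p : ℤ} (f : ℕ → ℤ) (n : ℕ)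
    (hf : ∀ i, p ∣ f (i + 1)) : ∑ i ∈ Finset.range (n + 1), f i ≡ f 0 [ZMOD p] := by
  rw [Finset.sum_range_succ']
  simpa using ((Int.modEq_zero_iff_dvd.2 (Finset.dvd_sum fun i _ => hf i)).add_right (f 0))

theorem Int.neg_natCast_emod_eq_or {p d : ℕ} (hd : d < p) :
    (-(d : ℤ)) % p = d ∨ (-(d : ℤ)) % p = (p - d : ℕ) := by
  rcases Nat.eq_zero_or_pos d with rfl | hd0
  · simp
  · right
    rw [Int.emod_eq_iff (by omega)]
    exact ⟨by omega, by omega, ⟨1, by push_cast [hd.le]; ring⟩⟩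

namespace SL2

theorem digit_lt {p : ℕ} (hp : 0 < p) (v i : ℕ) : digit p v i < p := Nat.mod_lt _ hp

/-- Every digit but the zeroth is multiplied by a positive power of `p`, so modulo `p` only the
sign given to the zeroth digit survives. -/
theorem digit_zero_reflDown {p : ℕ} (hp : 0 < p) (v : ℕ) (S : Finset ℕ)
    (hw : 0 < reflDown p v S) :
    digit p (reflDown p v S) 0 = digit p v 0 ∨ digit p (reflDown p v S) 0 = p - digit p v 0 := by
  set d := digit p v 0
  set f : ℕ → ℤ := fun i =>
    if i ∈ S then -((digit p v i : ℤ) * p ^ i) else (digit p v i : ℤ) * p ^ i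
  have hsum : (reflDown p v S : ℤ) = ∑ i ∈ Finset.range (lead p v + 1), f i :=
    Int.toNat_of_nonneg (Int.le_of_lt (Int.lt_toNat.1 hw))
  have hmod : (reflDown p v S : ℤ) ≡ f 0 [ZMOD p] := by
    rw [hsum]
    refine Int.sum_range_succ_modEq_apply_zero f _ fun i => ?_
    have hdvd : (p : ℤ) ∣ (digit p v (i + 1) : ℤ) * p ^ (i + 1) :=
      (dvd_pow_self _ i.succ_ne_zero).mul_left _
    simp only [f]
    split_ifs
    exacts [hdvd.neg_right, hdvd]
  have hdigit : (digit p (reflDown p v S) 0 : ℤ) = f 0 % p := by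
    simp only [digit, pow_zero, Nat.div_one]
    push_cast
    exact hmod
  have hd : d < p := digit_lt hp v 0
  by_cases h0 : 0 ∈ S
  · have : f 0 = -(d : ℤ) := by simp [f, h0, d]
    rw [this] at hdigit
    rcases Int.neg_natCast_emod_eq_or hd with h | h <;> [left; right] <;> omega
  · have : f 0 = d := by simp [f, h0, d]
    rw [this, Int.emod_eq_of_lt (by positivity) (by omega)] at hdigit
    left
    omega

theorem digit_zero_of_blockAdj {p v w : ℕ} (hp : 0 < p) (h : BlockAdj p v w) :
    digit p w 0 = digit p v 0 ∨ digit p w 0 = p - digit p v 0 := by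
  obtain ⟨⟨hv, hw⟩, ⟨S, -, rfl⟩ | ⟨S, -, rfl⟩⟩ := h
  · exact digit_zero_reflDown hp v S hw
  · have := digit_lt hp w 0
    rcases digit_zero_reflDown hp w S hv with h | h <;> omega

end SL2

theorem SL2.stmt2_general (p : ℕ) (e : ℕ) (he1 : 1 ≤ e) (he2 : e ≤ p - 1)
    (v : ℕ) (hv : v ∈ SL2.block p e) :
    SL2.digit p v 0 = e ∨ SL2.digit p v 0 = p - e := by
  have hp : 0 < p := by omega
  induction hv.2 with
  | refl => exact Or.inl (by simp [SL2.digit, Nat.mod_eq_of_lt (show e < p by omega)])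
  | tail hpath hadj ih =>
    have hstep := SL2.digit_zero_of_blockAdj hp hadj
    have hprev := ih ⟨hadj.1.1, hpath⟩
    omega

/-- For `e ∈ {1,…,p−1}` and `v ∈ ⟨e⟩_p`, the zeroth digit of `v` is
`e` or `p − e`. -/
theorem SL2.stmt2 (p : ℕ) (hp : p.Prime) (e : ℕ) (he1 : 1 ≤ e) (he2 : e ≤ p - 1)
    (v : ℕ) (hv : v ∈ SL2.block p e) :
    SL2.digit p v 0 = e ∨ SL2.digit p v 0 = p - e :=
  SL2.stmt2_general p e he1 he2 v hv
end

section
/- Let e ∈ {1,…,p−1} and let v ∈ ⟨e⟩_p with v ≠ e. Then 0 ∈ D_v; that is, a_0(v) ≠ 0 and 0 < j(v). -/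
open scoped Classical

/-! A downward reflection changes `v` by `-2 ∑_{i ∈ S} a_i(v) p^i`. Modulo `2p` every summand with
`i ≥ 1` vanishes, and `2 a_0(v) ≡ 2v`, so `v[S] ≡ ±v (mod 2p)`. Hence every vertex of `⟨e⟩_p` is
congruent to `±e` modulo `2p`: its digit `a_0` is nonzero because `p ∤ e`, and if `v < p` then
`v ≡ ±e (mod 2p)` forces `v = e`. -/

namespace SL2

lemma sum_digit_mul_pow_range (p v k : ℕ) :
    ∑ i ∈ Finset.range k, digit p v i * p ^ i = v % p ^ k := by
  induction k with
  | zero => simp [Nat.mod_one]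
  | succ k ih =>
    rw [Finset.sum_range_succ, ih, digit, ← Nat.mod_mul_right_div_self, ← pow_succ,
      ← Nat.mod_mod_of_dvd v (pow_dvd_pow p k.le_succ)]
    exact Nat.mod_add_div' _ _

lemma sum_digit_mul_pow {p : ℕ} (hp : 1 < p) (v : ℕ) :
    ∑ i ∈ Finset.range (lead p v + 1), digit p v i * p ^ i = v := by
  rw [sum_digit_mul_pow_range]
  exact Nat.mod_eq_of_lt (Nat.lt_pow_succ_log_self hp v)

lemma neg_mul_pow_succ {p : ℕ} (x : ZMod (2 * p)) (i : ℕ) :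
    -(x * p ^ (i + 1)) = x * p ^ (i + 1) := by
  have h2p : (2 * p : ZMod (2 * p)) = 0 := by exact_mod_cast ZMod.natCast_self (2 * p)
  rw [neg_eq_iff_add_eq_zero, ← two_mul]
  calc 2 * (x * p ^ (i + 1)) = x * p ^ i * (2 * p) := by ring
    _ = 0 := by rw [h2p, mul_zero]

lemma natCast_reflDown {p : ℕ} (hp : 1 < p) {v : ℕ} {S : Finset ℕ} (hpos : 0 < reflDown p v S) :
    (reflDown p v S : ZMod (2 * p)) = if 0 ∈ S then -(v : ZMod (2 * p)) else v := by
  unfold reflDown at hpos ⊢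
  rw [← Int.cast_natCast, Int.toNat_of_nonneg (Int.lt_toNat.1 hpos).le]
  conv_rhs => rw [← sum_digit_mul_pow hp v]
  push_cast
  have hsign : ∀ i, (if i ∈ S then -((digit p v i : ZMod (2 * p)) * p ^ i)
      else (digit p v i : ZMod (2 * p)) * p ^ i) =
      if 0 ∈ S then -((digit p v i : ZMod (2 * p)) * p ^ i)
      else (digit p v i : ZMod (2 * p)) * p ^ i := by
    rintro (_ | i)
    · rfl
    · split_ifs <;> simp only [neg_mul_pow_succ]
  simp only [hsign]
  split_ifs <;> simp only [Finset.sum_neg_distrib]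

lemma BlockAdj.natCast_eq_or_eq_neg {p : ℕ} (hp : 1 < p) {v w : ℕ} (h : BlockAdj p v w) :
    (w : ZMod (2 * p)) = v ∨ (w : ZMod (2 * p)) = -v := by
  obtain ⟨⟨hv, hw⟩, ⟨S, -, rfl⟩ | ⟨S, -, rfl⟩⟩ := h
  · rw [natCast_reflDown hp hw]
    split_ifs <;> simp
  · rw [natCast_reflDown hp hv]
    split_ifs <;> simp

lemma natCast_eq_or_eq_neg_of_reflTransGen {p : ℕ} (hp : 1 < p) {e v : ℕ}
    (h : Relation.ReflTransGen (BlockAdj p) e v) :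
    (v : ZMod (2 * p)) = e ∨ (v : ZMod (2 * p)) = -e := by
  induction h with
  | refl => exact Or.inl rfl
  | tail _ hbc ih =>
    rcases hbc.natCast_eq_or_eq_neg hp with h | h <;> rcases ih with h' | h' <;>
      simp [h, h']

lemma mod_ne_zero_of_natCast_eq_or_eq_neg {p e v : ℕ} (he : 0 < e) (hep : e < p)
    (h : (v : ZMod (2 * p)) = e ∨ (v : ZMod (2 * p)) = -e) : v % p ≠ 0 := by
  intro hv
  have hmodp : (v : ZMod p) = e ∨ (v : ZMod p) = -e := by
    rcases h with h | h <;> [left; right] <;>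
      simpa using congrArg (ZMod.castHom (dvd_mul_left p 2) (ZMod p)) h
  have hv0 : (v : ZMod p) = 0 := (ZMod.natCast_eq_zero_iff v p).2 (Nat.dvd_of_mod_eq_zero hv)
  have he0 : (e : ZMod p) = 0 := by
    rcases hmodp with h | h
    · rw [← h, hv0]
    · rw [← neg_eq_zero, ← h, hv0]
  exact Nat.not_dvd_of_pos_of_lt he hep ((ZMod.natCast_eq_zero_iff e p).1 he0)

lemma le_of_natCast_eq_or_eq_neg {p e v : ℕ} (hep : e < p)
    (h : (v : ZMod (2 * p)) = e ∨ (v : ZMod (2 * p)) = -e) (hne : v ≠ e) : p ≤ v := by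
  by_contra! hvp
  rcases h with h | h
  · rw [ZMod.natCast_eq_natCast_iff', Nat.mod_eq_of_lt (by omega), Nat.mod_eq_of_lt (by omega)] at h
    exact hne h
  · have hdvd : 2 * p ∣ v + e := by
      rw [← ZMod.natCast_eq_zero_iff, Nat.cast_add, h, neg_add_cancel]
    have := Nat.eq_zero_of_dvd_of_lt hdvd (by omega)
    omega

end SL2

/-- For `e ∈ {1,…,p−1}` and `v ∈ ⟨e⟩_p` with `v ≠ e` we have `0 ∈ D_v`. -/
theorem SL2.stmt3 (p : ℕ) (hp : p.Prime) (e : ℕ) (he1 : 1 ≤ e) (he2 : e ≤ p - 1)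
    (v : ℕ) (hv : v ∈ SL2.block p e) (hne : v ≠ e) :
    0 ∈ SL2.Dset p v := by
  have hep : e < p := by have := hp.two_le; omega
  have hmod := SL2.natCast_eq_or_eq_neg_of_reflTransGen hp.one_lt hv.2
  rw [SL2.Dset, Finset.mem_filter, Finset.mem_range, SL2.digit, pow_zero, Nat.div_one]
  exact ⟨Nat.log_pos hp.one_lt (SL2.le_of_natCast_eq_or_eq_neg hep hmod hne),
    SL2.mod_ne_zero_of_natCast_eq_or_eq_neg he1 hep hmod⟩
end
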